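/- arXiv:2206.00156 — 2 statements merged into one kernel-verified Lean document; each statement's English description precedes it below -/
import Mathlib

section
/- Monotonicity of the difference quotients of the supremum functional: Let T be a nonempty set and let Φ, Ψ : T → ℝ be bounded functions. Then for all real numbers 0 < s ≤ t, sup_{x ∈ T}(t·Φ(x) + Ψ(x)) − t·sup_{x ∈ T} Φ(x) ≤ sup_{x ∈ T}(s·Φ(x) + Ψ(x)) − s·sup_{x ∈ T} Φ(x). In other words, the map s ↦ sup_T(s·Φ + Ψ) − s·sup_T Φ is non-increasing on (0,∞). -/
open Set

/- Writing `t * f i + g i = (s * f i + g i) + (t - s) * f i`, the first summand is at most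
`⨆ i, s * f i + g i` and, as `t - s ≥ 0`, the second at most `(t - s) * ⨆ i, f i`. -/
theorem ciSup_mul_add_sub_mul_ciSup_le_of_le {ι : Sort*} [Nonempty ι] {f g : ι → ℝ} {s t : ℝ}
    (hf : BddAbove (range f)) (hsfg : BddAbove (range fun i ↦ s * f i + g i)) (hst : s ≤ t) :
    (⨆ i, t * f i + g i) - t * ⨆ i, f i ≤ (⨆ i, s * f i + g i) - s * ⨆ i, f i := by
  suffices ∀ i, t * f i + g i ≤ (⨆ i, s * f i + g i) + (t - s) * ⨆ i, f i by
    linarith [ciSup_le this]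
  intro i
  have h_sfg : s * f i + g i ≤ ⨆ i, s * f i + g i := le_ciSup hsfg i
  have h_f : (t - s) * f i ≤ (t - s) * ⨆ i, f i :=
    mul_le_mul_of_nonneg_left (le_ciSup hf i) (sub_nonneg.2 hst)
  linarith

theorem bddAbove_range_of_abs_le {ι : Sort*} {f : ι → ℝ} {M : ℝ} (h : ∀ i, |f i| ≤ M) :
    BddAbove (range f) :=
  ⟨M, forall_mem_range.2 fun i ↦ (abs_le.1 (h i)).2⟩

theorem bddAbove_range_const_mul_of_abs_le {ι : Sort*} {f : ι → ℝ} {M : ℝ} (h : ∀ i, |f i| ≤ M)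
    (c : ℝ) : BddAbove (range fun i ↦ c * f i) :=
  bddAbove_range_of_abs_le fun i ↦
    (abs_mul c (f i)).trans_le (mul_le_mul_of_nonneg_left (h i) (abs_nonneg c))

theorem sup_difference_quotient_antitone_general {T : Type*} [Nonempty T]
    (Φ Ψ : T → ℝ)
    (hΦ : ∃ M : ℝ, ∀ x, |Φ x| ≤ M) (hΨ : ∃ M : ℝ, ∀ x, |Ψ x| ≤ M)
    (s t : ℝ) (hst : s ≤ t) :
    (⨆ x, (t * Φ x + Ψ x)) - t * (⨆ x, Φ x) ≤
      (⨆ x, (s * Φ x + Ψ x)) - s * (⨆ x, Φ x) := by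
  obtain ⟨M, hM⟩ := hΦ
  obtain ⟨N, hN⟩ := hΨ
  exact ciSup_mul_add_sub_mul_ciSup_le_of_le (bddAbove_range_of_abs_le hM)
    ((bddAbove_range_const_mul_of_abs_le hM s).range_add (bddAbove_range_of_abs_le hN)) hst

/-- Monotonicity of the difference quotients of the supremum functional. -/
theorem sup_difference_quotient_antitone {T : Type*} [Nonempty T]
    (Φ Ψ : T → ℝ)
    (hΦ : ∃ M : ℝ, ∀ x, |Φ x| ≤ M) (hΨ : ∃ M : ℝ, ∀ x, |Ψ x| ≤ M)
    (s t : ℝ) (hs : 0 < s) (hst : s ≤ t) :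
    (⨆ x, (t * Φ x + Ψ x)) - t * (⨆ x, Φ x) ≤
      (⨆ x, (s * Φ x + Ψ x)) - s * (⨆ x, Φ x) :=
  sup_difference_quotient_antitone_general Φ Ψ hΦ hΨ s t hst
end

section
/- Lipschitz dependence of projected quantile functions on the direction: Let R > 0 and let Q be a probability measure on ℝ^d supported in the closed ball B̄(0,R). Then for all unit vectors u, v ∈ S^{d−1} and all t ∈ (0,1], |F_{Q,u}^{-1}(t) − F_{Q,v}^{-1}(t)| ≤ R·‖u − v‖₂. -/
open MeasureTheory Set

/-- The unit sphere `S^{d-1}` in `ℝ^d`. -/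
def sph (d : ℕ) : Set (EuclideanSpace ℝ (Fin d)) :=
  Metric.sphere (0 : EuclideanSpace ℝ (Fin d)) 1

/-- CDF of the projection of `μ` onto direction `u`. -/
noncomputable def projCDF {d : ℕ} (μ : Measure (EuclideanSpace ℝ (Fin d)))
    (u : EuclideanSpace ℝ (Fin d)) (x : ℝ) : ℝ :=
  (μ {y | (inner ℝ u y : ℝ) ≤ x}).toReal

/-- Quantile function of the projection of `μ` onto direction `u`:
`F_{μ,u}^{-1}(t) = inf {x ∈ [-R,R] : F_{μ,u}(x) ≥ t}`. -/
noncomputable def projQuantile {d : ℕ} (R : ℝ) (μ : Measure (EuclideanSpace ℝ (Fin d)))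
    (u : EuclideanSpace ℝ (Fin d)) (t : ℝ) : ℝ :=
  sInf {x : ℝ | x ∈ Set.Icc (-R) R ∧ t ≤ projCDF μ u x}

/-- Topological support of a measure on `ℝ`. -/
def msupp (μ : Measure ℝ) : Set ℝ := {x | ∀ ε > (0 : ℝ), 0 < μ (Metric.ball x ε)}

/-! On the ball of radius `R`, `⟪u, y⟫ ≤ ⟪v, y⟫ + R‖u - v‖`, so `F_v(x) ≤ F_u(x + R‖u - v‖)` and
every quantile of `u` lies within `R‖u - v‖` to the right of the same quantile of `v`. Capping the
shifted point at `R` is harmless because `F_u(R) = 1 ≥ t`. -/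

lemma inner_le_add_of_inner_le {E : Type*} [NormedAddCommGroup E] [InnerProductSpace ℝ E]
    {u v y : E} {R x : ℝ} (hy : ‖y‖ ≤ R) (hvy : inner ℝ v y ≤ x) :
    inner ℝ u y ≤ x + R * ‖u - v‖ := by
  have hshift : inner ℝ (u - v) y ≤ R * ‖u - v‖ :=
    calc inner ℝ (u - v) y ≤ ‖u - v‖ * ‖y‖ := real_inner_le_norm _ _
      _ ≤ ‖u - v‖ * R := by gcongr
      _ = R * ‖u - v‖ := mul_comm _ _
  rw [inner_sub_left] at hshift
  linarith

section projCDF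

variable {d : ℕ} {μ : Measure (EuclideanSpace ℝ (Fin d))} {R : ℝ}

lemma projCDF_le_projCDF_add [IsFiniteMeasure μ] (hμ : ∀ᵐ y ∂μ, ‖y‖ ≤ R)
    (u v : EuclideanSpace ℝ (Fin d)) (x : ℝ) :
    projCDF μ v x ≤ projCDF μ u (x + R * ‖u - v‖) := by
  refine ENNReal.toReal_mono (measure_ne_top μ _) (measure_mono_ae ?_)
  filter_upwards [hμ] with y hy hvy using inner_le_add_of_inner_le hy hvy

lemma projCDF_radius_eq_one [IsProbabilityMeasure μ] (hμ : ∀ᵐ y ∂μ, ‖y‖ ≤ R)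
    {u : EuclideanSpace ℝ (Fin d)} (hu : ‖u‖ ≤ 1) :
    projCDF μ u R = 1 := by
  have hall : ∀ᵐ y ∂μ, inner ℝ u y ≤ R := by
    filter_upwards [hμ] with y hy
    calc inner ℝ u y ≤ ‖u‖ * ‖y‖ := real_inner_le_norm _ _
      _ ≤ 1 * R := by gcongr
      _ = R := one_mul R
  rw [projCDF, (ae_iff_prob_eq_one (by fun_prop)).1 hall, ENNReal.toReal_one]

end projCDF

lemma sInf_superlevel_le_add {F G : ℝ → ℝ} {a b t δ : ℝ} (hab : a ≤ b) (hδ : 0 ≤ δ)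
    (hFG : ∀ x, F x ≤ G (x + δ)) (hFb : t ≤ F b) (hGb : t ≤ G b) :
    sInf {x | x ∈ Icc a b ∧ t ≤ G x} ≤ sInf {x | x ∈ Icc a b ∧ t ≤ F x} + δ := by
  rw [← sub_le_iff_le_add]
  refine le_csInf ⟨b, ⟨hab, le_rfl⟩, hFb⟩ fun x ⟨⟨hax, _⟩, hFx⟩ ↦ sub_le_iff_le_add.2 ?_
  have hmem : min (x + δ) b ∈ {x | x ∈ Icc a b ∧ t ≤ G x} := by
    refine ⟨⟨le_min (by linarith) hab, min_le_right _ _⟩, ?_⟩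
    rcases le_total (x + δ) b with h | h
    · rw [min_eq_left h]
      exact hFx.trans (hFG x)
    · rwa [min_eq_right h]
  exact (csInf_le ⟨a, fun _ hy ↦ hy.1.1⟩ hmem).trans (min_le_left _ _)

lemma projQuantile_le_add {d : ℕ} {μ : Measure (EuclideanSpace ℝ (Fin d))}
    [IsProbabilityMeasure μ] {R t : ℝ} (hR : 0 ≤ R) (hμ : ∀ᵐ y ∂μ, ‖y‖ ≤ R)
    {u v : EuclideanSpace ℝ (Fin d)} (hu : ‖u‖ ≤ 1) (hv : ‖v‖ ≤ 1) (ht : t ≤ 1) :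
    projQuantile R μ u t ≤ projQuantile R μ v t + R * ‖u - v‖ :=
  sInf_superlevel_le_add (by linarith) (by positivity) (projCDF_le_projCDF_add hμ u v)
    (by rwa [projCDF_radius_eq_one hμ hv]) (by rwa [projCDF_radius_eq_one hμ hu])

theorem projQuantile_lipschitz_in_direction_general
    (d : ℕ) (R : ℝ) (hR : 0 < R)
    (Q : Measure (EuclideanSpace ℝ (Fin d))) [IsProbabilityMeasure Q]
    (hQ : Q (Metric.closedBall 0 R) = 1) :
    ∀ u ∈ sph d, ∀ v ∈ sph d, ∀ t ∈ Set.Ioc (0 : ℝ) 1,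
      |projQuantile R Q u t - projQuantile R Q v t| ≤ R * ‖u - v‖ := by
  intro u hu v hv t ht
  have hQR : ∀ᵐ y ∂Q, ‖y‖ ≤ R := by
    filter_upwards [(mem_ae_iff_prob_eq_one measurableSet_closedBall).2 hQ] with y hy
    simpa using hy
  have hu : ‖u‖ ≤ 1 := (mem_sphere_zero_iff_norm.1 hu).le
  have hv : ‖v‖ ≤ 1 := (mem_sphere_zero_iff_norm.1 hv).le
  have huv := projQuantile_le_add hR.le hQR hu hv ht.2
  have hvu := projQuantile_le_add hR.le hQR hv hu ht.2
  rw [norm_sub_rev] at hvu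
  exact abs_sub_le_iff.2 ⟨by linarith, by linarith⟩

/-- Lipschitz dependence of projected quantile functions on the direction. -/
theorem projQuantile_lipschitz_in_direction
    (d : ℕ) (hd : 1 ≤ d) (R : ℝ) (hR : 0 < R)
    (Q : Measure (EuclideanSpace ℝ (Fin d))) [IsProbabilityMeasure Q]
    (hQ : Q (Metric.closedBall 0 R) = 1) :
    ∀ u ∈ sph d, ∀ v ∈ sph d, ∀ t ∈ Set.Ioc (0 : ℝ) 1,
      |projQuantile R Q u t - projQuantile R Q v t| ≤ R * ‖u - v‖ :=
  projQuantile_lipschitz_in_direction_general d R hR Q hQ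
end
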